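/- The sum over n ≥ 0 of n·p·(pq)^n·C_n equals q/(p−q), where C_n is the n-th Catalan number, p + q = 1, and 0 < q < 1/2. -/

import Mathlib

/-!
Write `G = ∑ Cₙ xⁿ` and `T = ∑ n Cₙ xⁿ` for `0 ≤ x < 1/4`. The Catalan convolution gives
`G = 1 + x G²`, and the recurrence `(n + 2) Cₙ₊₁ = 2 (2n + 1) Cₙ` gives the linear relation
`(1 - 4x) T = 1 - (1 - 2x) G`. At `x = pq` the quadratic has the roots `1/p` and `1/q`; since
`T ≥ 0` forces `G ≤ 1/(1 - 2pq) < 1/q`, we get `G = 1/p`, and then the linear relation yields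
`T = q / (p (p - q))`.
-/

open Finset

theorem catalan_le_four_pow (n : ℕ) : catalan n ≤ 4 ^ n :=
  calc catalan n ≤ (n + 1) * catalan n := Nat.le_mul_of_pos_left _ n.succ_pos
    _ = n.centralBinom := succ_mul_catalan_eq_centralBinom n
    _ ≤ 4 ^ n := Nat.centralBinom_le_four_pow n

theorem succ_succ_mul_catalan_succ (n : ℕ) :
    (n + 2) * catalan (n + 1) = 2 * (2 * n + 1) * catalan n := by
  refine Nat.eq_of_mul_eq_mul_left n.succ_pos ?_
  calc (n + 1) * ((n + 2) * catalan (n + 1))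
      = (n + 1) * (n + 1).centralBinom := by rw [← succ_mul_catalan_eq_centralBinom]
    _ = 2 * (2 * n + 1) * n.centralBinom := Nat.succ_mul_centralBinom_succ n
    _ = (n + 1) * (2 * (2 * n + 1) * catalan n) := by
        rw [← succ_mul_catalan_eq_centralBinom]; ring

section GeneratingFunction

theorem norm_catalan_mul_pow_le (x : ℝ) (n : ℕ) : ‖(catalan n : ℝ) * x ^ n‖ ≤ (4 * |x|) ^ n := by
  rw [norm_mul, norm_pow, Real.norm_natCast, Real.norm_eq_abs, mul_pow]
  gcongr
  exact_mod_cast catalan_le_four_pow n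

theorem catalan_succ_mul_pow_succ (x : ℝ) (n : ℕ) :
    (catalan (n + 1) : ℝ) * x ^ (n + 1) =
      x * ∑ ij ∈ antidiagonal n, (catalan ij.1 * x ^ ij.1) * (catalan ij.2 * x ^ ij.2) := by
  rw [catalan_succ', Nat.cast_sum, sum_mul, mul_sum]
  refine sum_congr rfl fun ij hij => ?_
  rw [← mem_antidiagonal.mp hij]
  push_cast
  ring

variable {x : ℝ}

theorem summable_norm_catalan_mul_pow (hx : 4 * |x| < 1) :
    Summable fun n => ‖(catalan n : ℝ) * x ^ n‖ :=
  (summable_geometric_of_lt_one (by positivity) hx).of_nonneg_of_le (fun _ => norm_nonneg _)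
    (norm_catalan_mul_pow_le x)

theorem summable_norm_nat_mul_catalan_mul_pow (hx : 4 * |x| < 1) :
    Summable fun n : ℕ => ‖(n : ℝ) * ((catalan n : ℝ) * x ^ n)‖ := by
  have hgeom : Summable fun n : ℕ => (n : ℝ) * (4 * |x|) ^ n := by
    simpa using summable_pow_mul_geometric_of_norm_lt_one (R := ℝ) 1
      (by rwa [Real.norm_of_nonneg (by positivity)])
  refine hgeom.of_nonneg_of_le (fun _ => norm_nonneg _) fun n => ?_
  rw [norm_mul, Real.norm_natCast]
  exact mul_le_mul_of_nonneg_left (norm_catalan_mul_pow_le x n) n.cast_nonneg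

theorem tsum_catalan_mul_pow_eq_one_add (hx : 4 * |x| < 1) :
    ∑' n, (catalan n : ℝ) * x ^ n = 1 + x * (∑' n, (catalan n : ℝ) * x ^ n) ^ 2 := by
  have hnorm := summable_norm_catalan_mul_pow hx
  conv_lhs => rw [hnorm.of_norm.tsum_eq_zero_add]
  rw [sq,
    tsum_mul_tsum_eq_tsum_sum_antidiagonal_of_summable_norm hnorm hnorm, ← tsum_mul_left]
  simp [catalan_succ_mul_pow_succ]

theorem one_sub_four_mul_tsum_nat_mul_catalan_mul_pow (hx : 4 * |x| < 1) :
    (1 - 4 * x) * ∑' n : ℕ, (n : ℝ) * ((catalan n : ℝ) * x ^ n) =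
      1 - (1 - 2 * x) * ∑' n, (catalan n : ℝ) * x ^ n := by
  set a : ℕ → ℝ := fun n => (catalan n : ℝ) * x ^ n
  set b : ℕ → ℝ := fun n => n * a n
  have ha : HasSum a (∑' n, a n) := (summable_norm_catalan_mul_pow hx).of_norm.hasSum
  have hb : HasSum b (∑' n, b n) := (summable_norm_nat_mul_catalan_mul_pow hx).of_norm.hasSum
  have hrec : ∀ n, b (n + 1) + a (n + 1) = 4 * x * b n + 2 * x * a n := fun n => by
    have hcat : ((n + 2) * catalan (n + 1) : ℝ) = 2 * (2 * n + 1) * catalan n := by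
      exact_mod_cast succ_succ_mul_catalan_succ n
    simp only [a, b, Nat.cast_add, Nat.cast_one, pow_succ]
    linear_combination x ^ n * x * hcat
  have hshift := ((hasSum_nat_add_iff' 1).mpr hb).add ((hasSum_nat_add_iff' 1).mpr ha)
  rw [funext hrec] at hshift
  have hsum := hshift.unique ((hb.mul_left (4 * x)).add (ha.mul_left (2 * x)))
  have ha0 : a 0 = 1 := by simp [a]
  have hb0 : b 0 = 0 := by simp [b]
  rw [sum_range_one, sum_range_one, ha0, hb0] at hsum
  linear_combination hsum

end GeneratingFunction

section Evaluation

variable {p q : ℝ}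

theorem four_mul_abs_mul_lt_one (hpq : p + q = 1) (hq : 0 ≤ q) (hqp : q < p) :
    4 * |p * q| < 1 := by
  rw [abs_of_nonneg (mul_nonneg (hq.trans hqp.le) hq)]
  nlinarith [sq_pos_of_pos (sub_pos.2 hqp)]

theorem tsum_catalan_mul_pow_mul_eq_inv (hpq : p + q = 1) (hq : 0 ≤ q) (hqp : q < p) :
    ∑' n, (catalan n : ℝ) * (p * q) ^ n = p⁻¹ := by
  have hx := four_mul_abs_mul_lt_one hpq hq hqp
  have hpq0 : 0 ≤ p * q := mul_nonneg (hq.trans hqp.le) hq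
  set G := ∑' n, (catalan n : ℝ) * (p * q) ^ n
  have hroots : (p * G - 1) * (q * G - 1) = 0 := by
    linear_combination -tsum_catalan_mul_pow_eq_one_add hx - G * hpq
  rcases mul_eq_zero.mp hroots with h | h
  · exact eq_inv_of_mul_eq_one_left (by linear_combination h)
  · have hT : 0 ≤ ∑' n : ℕ, (n : ℝ) * ((catalan n : ℝ) * (p * q) ^ n) :=
      tsum_nonneg fun n => by positivity [pow_nonneg hpq0 n]
    have hG : 0 ≤ 1 - (1 - 2 * (p * q)) * G := by
      rw [← one_sub_four_mul_tsum_nat_mul_catalan_mul_pow hx]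
      exact mul_nonneg (by linarith [abs_of_nonneg hpq0]) hT
    have hneg : q * (1 - (1 - 2 * (p * q)) * G) = -(p * (p - q)) := by
      linear_combination (2 * p * q - 1) * h + (p + 1) * hpq
    nlinarith [mul_nonneg hq hG, mul_pos (hq.trans_lt hqp) (sub_pos.2 hqp)]

theorem tsum_nat_mul_catalan_mul_pow_mul (hpq : p + q = 1) (hq : 0 ≤ q) (hqp : q < p) :
    ∑' n : ℕ, (n : ℝ) * ((catalan n : ℝ) * (p * q) ^ n) = q / (p * (p - q)) := by
  have hlin := one_sub_four_mul_tsum_nat_mul_catalan_mul_pow (four_mul_abs_mul_lt_one hpq hq hqp)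
  set T := ∑' n : ℕ, (n : ℝ) * ((catalan n : ℝ) * (p * q) ^ n)
  rw [tsum_catalan_mul_pow_mul_eq_inv hpq hq hqp,
    show 1 - 4 * (p * q) = (p - q) ^ 2 by linear_combination -(p + q + 1) * hpq] at hlin
  have hp : p ≠ 0 := (hq.trans_lt hqp).ne'
  have hpq' : p - q ≠ 0 := (sub_pos.2 hqp).ne'
  rw [eq_div_iff (mul_ne_zero hp hpq')]
  field_simp at hlin
  refine mul_left_cancel₀ hpq' ?_
  linear_combination hlin + (1 + q) * hpq

end Evaluation

theorem selfish_mining_catalan_expectation (p q : ℝ) (hpq : p + q = 1)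
    (hq0 : 0 < q) (hq : q < 1/2) :
    HasSum (fun n : ℕ => (n : ℝ) * p * (p * q) ^ n * (catalan n : ℝ))
      (q / (p - q)) := by
  have hqp : q < p := by linarith
  have hp : p ≠ 0 := (hq0.trans hqp).ne'
  have hT := (summable_norm_nat_mul_catalan_mul_pow
    (four_mul_abs_mul_lt_one hpq hq0.le hqp)).of_norm.hasSum.mul_left p
  rwa [tsum_nat_mul_catalan_mul_pow_mul hpq hq0.le hqp, mul_div_assoc', mul_div_mul_left _ _ hp,
    funext fun n : ℕ => show p * (n * (catalan n * (p * q) ^ n)) = n * p * (p * q) ^ n * catalan n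
      by ring] at hT
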